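/- If for ℙ-a.e. ω the family {P^{(n)}_{σ^{-n}ω} 1_X}_n ⊂ L¹(X,m) is weakly precompact, then for any Banach limit LIM and ℙ-a.e. ω, the set function μ_ω(E) = LIM({∫_E P^{(n)}_{σ^{-n}ω} 1_X dm}_n) is a countably additive probability measure on (X,𝒜), absolutely continuous with respect to m, and satisfies P_ω (dμ_ω/dm) = dμ_{σω}/dm a.e. -/

import Mathlib

/-!
For a.e. `ω` the functions `u_ω n = P^{(n)}_{σ^{-n}ω} 1` are probability densities. Weak
sequential precompactness makes `E ↦ LIM (∫_E u_ω n)` continuous at `∅` along decreasing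
sequences (a subsequence staying large on every `E k` would have a weak limit that does too),
so it is a measure with an `L¹` density `d_ω`.

The Banach limit `ℓ ↦ LIM (ℓ (u_ω n))` and evaluation at `d_ω` are continuous functionals on
the dual of `L¹` that agree on the set integrals `g ↦ ∫_B g`, hence on their closed span. That
span contains every `F` with `0 ≤ F g ≤ ∫ g` for `g ≥ 0`: by Radon–Nikodym such an `F` is
integration against some `0 ≤ ρ ≤ 1`, and `ρ` is a uniform limit of simple functions. For
`F = ∫_B P_ω ·`, the cocycle identity `P_ω (u_ω n) = u_{σω} (n + 1)` and shift invariance of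
`LIM` then give `∫_B P_ω d_ω = ∫_B d_{σω}`.
-/

open MeasureTheory Filter

/-- `P_ω^{(n)} = P_{σ^{n-1}ω} ∘ ⋯ ∘ P_ω`, `P_ω^{(0)} = id`. -/
noncomputable def clmCocycle {Ω 𝔛 : Type*} [NormedAddCommGroup 𝔛] [NormedSpace ℝ 𝔛]
    (σ : Ω → Ω) (P : Ω → (𝔛 →L[ℝ] 𝔛)) : ℕ → Ω → (𝔛 →L[ℝ] 𝔛)
  | 0, _ => ContinuousLinearMap.id ℝ 𝔛
  | n + 1, ω => (clmCocycle σ P n (σ ω)).comp (P ω)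

/-- The constant function `1` as an element of `L¹(X,m)`. -/
noncomputable def oneLp {X : Type*} [MeasurableSpace X] (m : Measure X)
    [IsProbabilityMeasure m] : Lp ℝ 1 m :=
  indicatorConstLp 1 MeasurableSet.univ (by simp) (1 : ℝ)

/-- Weak sequential precompactness of a sequence. -/
def WeaklySeqPrecompact {E : Type*} [NormedAddCommGroup E] [NormedSpace ℝ E]
    (u : ℕ → E) : Prop :=
  ∀ φ : ℕ → ℕ, StrictMono φ → ∃ ψ : ℕ → ℕ, StrictMono ψ ∧ ∃ x : E,
    ∀ ℓ : E →L[ℝ] ℝ, Tendsto (fun k => ℓ (u (φ (ψ k)))) atTop (nhds (ℓ x))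

open scoped Topology ENNReal

structure IsBanachLimit (LIM : (ℕ → ℝ) →ₗ[ℝ] ℝ) : Prop where
  nonneg : ∀ u : ℕ → ℝ, (∃ M, ∀ n, |u n| ≤ M) → (∀ n, 0 ≤ u n) → 0 ≤ LIM u
  map_shift : ∀ u : ℕ → ℝ, (∃ M, ∀ n, |u n| ≤ M) → LIM (fun n => u (n + 1)) = LIM u
  map_of_tendsto : ∀ (u : ℕ → ℝ) (a : ℝ), Tendsto u atTop (𝓝 a) → LIM u = a

namespace IsBanachLimit

variable {LIM : (ℕ → ℝ) →ₗ[ℝ] ℝ} {v w : ℕ → ℝ} {M N c : ℝ}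

theorem map_const (hLIM : IsBanachLimit LIM) (c : ℝ) : LIM (fun _ => c) = c :=
  hLIM.map_of_tendsto _ c tendsto_const_nhds

theorem mono (hLIM : IsBanachLimit LIM) (hv : ∀ n, |v n| ≤ M) (hw : ∀ n, |w n| ≤ N)
    (h : ∀ n, v n ≤ w n) : LIM v ≤ LIM w := by
  have hbdd : ∀ n, |(w - v) n| ≤ N + M :=
    fun n => (abs_sub _ _).trans (add_le_add (hw n) (hv n))
  have := hLIM.nonneg (w - v) ⟨_, hbdd⟩ fun n => sub_nonneg.2 (h n)
  rwa [map_sub, sub_nonneg] at this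

theorem apply_le_of_le (hLIM : IsBanachLimit LIM) (hv : ∀ n, |v n| ≤ M) (h : ∀ n, v n ≤ c) :
    LIM v ≤ c :=
  (hLIM.mono hv (fun _ => le_rfl) h).trans_eq (hLIM.map_const c)

theorem le_apply_of_le (hLIM : IsBanachLimit LIM) (hv : ∀ n, |v n| ≤ M) (h : ∀ n, c ≤ v n) :
    c ≤ LIM v :=
  (hLIM.map_const c).symm.trans_le (hLIM.mono (fun _ => le_rfl) hv h)

theorem abs_apply_le (hLIM : IsBanachLimit LIM) (hv : ∀ n, |v n| ≤ M) : |LIM v| ≤ M :=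
  abs_le.2 ⟨hLIM.le_apply_of_le hv fun n => (abs_le.1 (hv n)).1,
    hLIM.apply_le_of_le hv fun n => (abs_le.1 (hv n)).2⟩

theorem map_shift_add (hLIM : IsBanachLimit LIM) (hv : ∀ n, |v n| ≤ M) (k : ℕ) :
    LIM (fun n => v (n + k)) = LIM v := by
  induction k with
  | zero => rfl
  | succ k ih =>
    rw [← ih, ← hLIM.map_shift (fun n => v (n + k)) ⟨M, fun n => hv _⟩]
    exact congrArg LIM (funext fun n => congrArg v (by omega))

theorem apply_le_of_eventually_le (hLIM : IsBanachLimit LIM) (hv : ∀ n, |v n| ≤ M)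
    (h : ∀ᶠ n in atTop, v n ≤ c) : LIM v ≤ c := by
  obtain ⟨k, hk⟩ := eventually_atTop.1 h
  rw [← hLIM.map_shift_add hv k]
  exact hLIM.apply_le_of_le (fun n => hv _) fun n => hk _ (Nat.le_add_left k n)

theorem frequently_lt_of_lt_apply (hLIM : IsBanachLimit LIM) (hv : ∀ n, |v n| ≤ M)
    (h : c < LIM v) : ∃ᶠ n in atTop, c < v n := by
  contrapose! h
  exact hLIM.apply_le_of_eventually_le hv (by simpa using h)

noncomputable def toBidual (hLIM : IsBanachLimit LIM) {E : Type*} [NormedAddCommGroup E]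
    [NormedSpace ℝ E] {u : ℕ → E} {C : ℝ} (hu : ∀ n, ‖u n‖ ≤ C) :
    StrongDual ℝ (StrongDual ℝ E) :=
  LinearMap.mkContinuous
    { toFun := fun ℓ => LIM fun n => ℓ (u n)
      map_add' := fun ℓ ℓ' => map_add LIM (fun n => ℓ (u n)) (fun n => ℓ' (u n))
      map_smul' := fun a ℓ => map_smul LIM a (fun n => ℓ (u n)) } C
    fun ℓ => by
      rw [mul_comm]
      exact hLIM.abs_apply_le fun n =>
        (ℓ.le_opNorm (u n)).trans (mul_le_mul_of_nonneg_left (hu n) (norm_nonneg ℓ))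

@[simp]
theorem toBidual_apply (hLIM : IsBanachLimit LIM) {E : Type*} [NormedAddCommGroup E]
    [NormedSpace ℝ E] {u : ℕ → E} {C : ℝ} (hu : ∀ n, ‖u n‖ ≤ C) (ℓ : StrongDual ℝ E) :
    hLIM.toBidual hu ℓ = LIM fun n => ℓ (u n) :=
  rfl

end IsBanachLimit

theorem exists_measure_of_tendsto_zero {X : Type*} [MeasurableSpace X] (ν : Set X → ℝ)
    (hν_nonneg : ∀ s, MeasurableSet s → 0 ≤ ν s)
    (hν_union : ∀ s t, MeasurableSet s → MeasurableSet t → Disjoint s t →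
      ν (s ∪ t) = ν s + ν t)
    (hν_tendsto : ∀ s : ℕ → Set X, (∀ n, MeasurableSet (s n)) → Antitone s → ⋂ n, s n = ∅ →
      Tendsto (fun n => ν (s n)) atTop (𝓝 0)) :
    ∃ μ : Measure X, ∀ s, MeasurableSet s → μ s = ENNReal.ofReal (ν s) := by
  have hC : IsSetRing {s : Set X | MeasurableSet s} :=
    ⟨MeasurableSet.empty, fun _ _ => MeasurableSet.union, fun _ _ => MeasurableSet.diff⟩
  have hν_empty : ν ∅ = 0 := by simpa using hν_union ∅ ∅ .empty .empty disjoint_bot_left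
  let c : AddContent ℝ≥0∞ {s : Set X | MeasurableSet s} :=
    hC.addContent_of_union (fun s => ENNReal.ofReal (ν s)) (by simp [hν_empty])
      fun hs ht hst => by
        rw [hν_union _ _ hs ht hst, ENNReal.ofReal_add (hν_nonneg _ hs) (hν_nonneg _ ht)]
  refine ⟨Measure.ofMeasurable (fun s _ => c s) (by simp [c]) fun f hf hdisj =>
    addContent_iUnion_eq_sum_of_tendsto_zero hC c (fun _ _ => ENNReal.ofReal_ne_top)
      (fun s hs hanti hempty => ?_) hf (MeasurableSet.iUnion hf) hdisj,
    fun s hs => Measure.ofMeasurable_apply s hs⟩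
  have := ENNReal.tendsto_ofReal (hν_tendsto s hs hanti hempty)
  rwa [ENNReal.ofReal_zero] at this

theorem abs_sub_nat_floor_div_le {r K : ℝ} (hr : 0 ≤ r) (hK : 0 < K) :
    |r - ⌊K * r⌋₊ / K| ≤ 1 / K := by
  have h_le := Nat.floor_le (mul_nonneg hK.le hr)
  have h_lt := Nat.lt_floor_add_one (K * r)
  rw [show r - ⌊K * r⌋₊ / K = (K * r - ⌊K * r⌋₊) / K by field_simp, abs_div, abs_of_pos hK,
    abs_of_nonneg (sub_nonneg.2 h_le)]
  exact div_le_div_of_nonneg_right (by linarith) hK.le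

section L1Functionals

variable {X : Type*} [MeasurableSpace X] {m : Measure X}

structure IsProbabilityDensity (g : Lp ℝ 1 m) : Prop where
  nonneg : 0 ≤ᵐ[m] g
  integral_eq_one : ∫ x, g x ∂m = 1

theorem norm_eq_integral_of_nonneg {g : Lp ℝ 1 m} (hg : 0 ≤ᵐ[m] g) : ‖g‖ = ∫ x, g x ∂m := by
  rw [L1.norm_eq_integral_norm]
  exact integral_congr_ae (hg.mono fun x hx => abs_of_nonneg hx)

theorem IsProbabilityDensity.norm_eq_one {g : Lp ℝ 1 m} (hg : IsProbabilityDensity g) :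
    ‖g‖ = 1 :=
  (norm_eq_integral_of_nonneg hg.nonneg).trans hg.integral_eq_one

theorem isProbabilityDensity_oneLp [IsProbabilityMeasure m] :
    IsProbabilityDensity (oneLp m) :=
  ⟨.of_forall fun x => by simp [oneLp], by simp [oneLp]⟩

theorem withDensity_ofReal_apply_eq {d : Lp ℝ 1 m} (hd : 0 ≤ᵐ[m] d) {E : Set X}
    (hE : MeasurableSet E) :
    m.withDensity (fun x => ENNReal.ofReal (d x)) E = ENNReal.ofReal (∫ x in E, d x ∂m) := by
  rw [withDensity_apply _ hE, ofReal_integral_eq_lintegral_ofReal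
    (L1.integrable_coeFn d).integrableOn (ae_restrict_of_ae hd)]

theorem IsProbabilityDensity.isProbabilityMeasure_withDensity {d : Lp ℝ 1 m}
    (hd : IsProbabilityDensity d) :
    IsProbabilityMeasure (m.withDensity fun x => ENNReal.ofReal (d x)) :=
  ⟨by rw [withDensity_ofReal_apply_eq hd.nonneg .univ, setIntegral_univ, hd.integral_eq_one,
    ENNReal.ofReal_one]⟩

theorem toReal_rnDeriv_withDensity_ofReal [SigmaFinite m] {d : Lp ℝ 1 m} (hd : 0 ≤ᵐ[m] d) :
    ⇑d =ᵐ[m] fun x => ((m.withDensity fun x => ENNReal.ofReal (d x)).rnDeriv m x).toReal := by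
  filter_upwards [Measure.rnDeriv_withDensity₀ m
    (Lp.aestronglyMeasurable d).aemeasurable.ennreal_ofReal, hd] with x hx hdx
  rw [hx, ENNReal.toReal_ofReal hdx]

noncomputable def setIntegralCLM (m : Measure X) (B : Set X) : Lp ℝ 1 m →L[ℝ] ℝ :=
  L1.integralCLM.comp (LpToLpRestrictCLM X ℝ ℝ m 1 B)

theorem setIntegralCLM_apply (B : Set X) (g : Lp ℝ 1 m) :
    setIntegralCLM m B g = ∫ x in B, g x ∂m :=
  (L1.integral_eq _).symm.trans <|
    (L1.integral_eq_integral _).trans (integral_congr_ae (LpToLpRestrictCLM_coeFn ℝ B g))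

theorem setIntegralCLM_union {s t : Set X} (hst : Disjoint s t) (ht : MeasurableSet t) :
    setIntegralCLM m (s ∪ t) = setIntegralCLM m s + setIntegralCLM m t := by
  ext g
  simp only [add_apply, setIntegralCLM_apply]
  exact setIntegral_union hst ht (L1.integrable_coeFn g).integrableOn
    (L1.integrable_coeFn g).integrableOn

theorem abs_setIntegral_le_norm (g : Lp ℝ 1 m) (B : Set X) : |∫ x in B, g x ∂m| ≤ ‖g‖ := by
  rw [L1.norm_eq_integral_norm]
  exact abs_integral_le_integral_abs.trans
    (setIntegral_le_integral (L1.integrable_coeFn g).norm (.of_forall fun _ => abs_nonneg _))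

theorem abs_integral_mul_le {φ : X → ℝ} {c : ℝ} (hφ : ∀ x, |φ x| ≤ c) (g : Lp ℝ 1 m) :
    |∫ x, φ x * g x ∂m| ≤ c * ‖g‖ := by
  rw [L1.norm_eq_integral_norm, ← integral_const_mul]
  refine abs_integral_le_integral_abs.trans (integral_mono_of_nonneg
    (.of_forall fun _ => abs_nonneg _) ((L1.integrable_coeFn g).norm.const_mul c)
    (.of_forall fun x => ?_))
  simp only [abs_mul, Real.norm_eq_abs]
  exact mul_le_mul_of_nonneg_right (hφ x) (abs_nonneg _)

theorem sum_smul_setIntegralCLM_preimage_apply {f : X → ℕ} (hf : Measurable f) {N : ℕ}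
    (hfN : ∀ x, f x ≤ N) (c : ℕ → ℝ) (g : Lp ℝ 1 m) :
    (∑ j ∈ Finset.range (N + 1), c j • setIntegralCLM m (f ⁻¹' {j})) g =
      ∫ x, c (f x) * g x ∂m := by
  classical
  have hf_mem : ∀ x, f x ∈ Finset.range (N + 1) := fun x => Finset.mem_range_succ_iff.2 (hfN x)
  simp only [FunLike.coe_sum, Finset.sum_apply, smul_apply, setIntegralCLM_apply, smul_eq_mul]
  calc ∑ j ∈ Finset.range (N + 1), c j * ∫ x in f ⁻¹' {j}, g x ∂m
      = ∑ j ∈ Finset.range (N + 1), ∫ x, (f ⁻¹' {j}).indicator (fun x => c j * g x) x ∂m := by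
        refine Finset.sum_congr rfl fun j _ => ?_
        rw [integral_indicator (hf (measurableSet_singleton j)), integral_const_mul]
    _ = ∫ x, ∑ j ∈ Finset.range (N + 1), (f ⁻¹' {j}).indicator (fun x => c j * g x) x ∂m :=
        (integral_finsetSum _ fun j _ => ((L1.integrable_coeFn g).const_mul _).indicator
          (hf (measurableSet_singleton j))).symm
    _ = ∫ x, c (f x) * g x ∂m := by simp [Set.indicator_apply, hf_mem]

theorem ContinuousLinearMap.ext_indicatorConstLp {F G : Lp ℝ 1 m →L[ℝ] ℝ}
    (h : ∀ s (hs : MeasurableSet s) (hms : m s ≠ ∞),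
      F (indicatorConstLp 1 hs hms 1) = G (indicatorConstLp 1 hs hms 1)) : F = G := by
  have h_smul : ∀ s (hs : MeasurableSet s) (hms : m s ≠ ∞) (c : ℝ),
      indicatorConstLp 1 hs hms c = c • indicatorConstLp 1 hs hms 1 := fun s hs hms c => by
    refine Lp.ext ?_
    filter_upwards [indicatorConstLp_coeFn (p := 1) (hs := hs) (hμs := hms) (c := c),
      indicatorConstLp_coeFn (p := 1) (hs := hs) (hμs := hms) (c := (1 : ℝ)),
      Lp.coeFn_smul c (indicatorConstLp 1 hs hms (1 : ℝ))] with x hc h1 hsmul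
    rw [hc, hsmul, Pi.smul_apply, h1]
    by_cases hx : x ∈ s <;> simp [hx]
  ext g
  refine Lp.induction ENNReal.one_ne_top (fun g => F g = G g) (fun c s hs hms => ?_)
    (fun _ _ _ _ _ hf hg => by simp only [map_add, hf, hg]) (isClosed_eq F.cont G.cont) g
  rw [Lp.simpleFunc.coe_indicatorConst, h_smul, map_smul, map_smul, h s hs hms.ne]

theorem mem_closure_span_setIntegralCLM_of_density {ρ : X → ℝ} (hρ : Measurable ρ)
    (hρ_mem : ∀ x, ρ x ∈ Set.Icc 0 1) {F : Lp ℝ 1 m →L[ℝ] ℝ}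
    (hF : ∀ g : Lp ℝ 1 m, F g = ∫ x, ρ x * g x ∂m) :
    F ∈ (Submodule.span ℝ (setIntegralCLM m '' {B | MeasurableSet B})).topologicalClosure := by
  refine Metric.mem_closure_iff.2 fun ε hε => ?_
  obtain ⟨K, hK⟩ := exists_nat_gt (1 / ε)
  have hK_pos : (0 : ℝ) < K := (one_div_pos.2 hε).trans hK
  -- `ρ` is within `1 / K` of the simple function `⌊K ρ⌋₊ / K`.
  have h_floor : Measurable fun x => ⌊K * ρ x⌋₊ := (measurable_const.mul hρ).nat_floor
  have h_floor_le : ∀ x, ⌊K * ρ x⌋₊ ≤ K :=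
    fun x => Nat.floor_le_of_le (mul_le_of_le_one_right hK_pos.le (hρ_mem x).2)
  set S := ∑ j ∈ Finset.range (K + 1),
    ((j : ℝ) / K) • setIntegralCLM m ((fun x => ⌊K * ρ x⌋₊) ⁻¹' {j})
  have hS_mem : S ∈ Submodule.span ℝ (setIntegralCLM m '' {B | MeasurableSet B}) :=
    Submodule.sum_mem _ fun j _ =>
      Submodule.smul_mem _ _ (Submodule.subset_span ⟨_, h_floor (measurableSet_singleton j), rfl⟩)
  refine ⟨S, hS_mem, dist_eq_norm F S ▸ lt_of_le_of_lt
    (ContinuousLinearMap.opNorm_le_bound _ (by positivity) fun g => ?_)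
    ((one_div_lt hK_pos hε).2 hK)⟩
  have h_int : ∀ φ : X → ℝ, Measurable φ → (∀ x, |φ x| ≤ 1) →
      Integrable (fun x => φ x * g x) m := fun φ hφ hφ_le =>
    (L1.integrable_coeFn g).bdd_mul hφ.aestronglyMeasurable (.of_forall hφ_le)
  rw [sub_apply, hF, sum_smul_setIntegralCLM_preimage_apply h_floor h_floor_le, ← integral_sub,
    Real.norm_eq_abs]
  · simp_rw [← sub_mul]
    exact abs_integral_mul_le (fun x => abs_sub_nat_floor_div_le (hρ_mem x).1 hK_pos) g
  · exact h_int ρ hρ fun x => abs_le.2 ⟨by linarith [(hρ_mem x).1], (hρ_mem x).2⟩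
  · refine h_int _ (by fun_prop) fun x => ?_
    rw [abs_of_nonneg (by positivity)]
    exact div_le_one_of_le₀ (by exact_mod_cast h_floor_le x) hK_pos.le

variable [IsFiniteMeasure m]

theorem exists_measure_le_of_nonneg_of_le_integral {F : Lp ℝ 1 m →L[ℝ] ℝ}
    (hF_nonneg : ∀ g : Lp ℝ 1 m, 0 ≤ᵐ[m] g → 0 ≤ F g)
    (hF_le : ∀ g : Lp ℝ 1 m, 0 ≤ᵐ[m] g → F g ≤ ∫ x, g x ∂m) :
    ∃ τ : Measure X, τ ≤ m ∧ ∀ s (hs : MeasurableSet s),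
      τ.real s = F (indicatorConstLp 1 hs (measure_ne_top m s) 1) := by
  classical
  set ν : Set X → ℝ := fun s =>
    if hs : MeasurableSet s then F (indicatorConstLp 1 hs (measure_ne_top m s) 1) else 0
  have hν : ∀ s (hs : MeasurableSet s),
      ν s = F (indicatorConstLp 1 hs (measure_ne_top m s) 1) :=
    fun s hs => dif_pos hs
  have hν_bounds : ∀ s, MeasurableSet s → 0 ≤ ν s ∧ ν s ≤ m.real s := fun s hs => by
    have h_ind : 0 ≤ᵐ[m] indicatorConstLp 1 hs (measure_ne_top m s) (1 : ℝ) :=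
      indicatorConstLp_coeFn.mono fun x hx => by
        rw [hx]; exact Set.indicator_nonneg (fun _ _ => zero_le_one) x
    rw [hν s hs]
    refine ⟨hF_nonneg _ h_ind, (hF_le _ h_ind).trans_eq ?_⟩
    rw [integral_indicatorConstLp, smul_eq_mul, mul_one]
  obtain ⟨τ, hτ⟩ := exists_measure_of_tendsto_zero ν (fun s hs => (hν_bounds s hs).1)
    (fun s t hs ht hst => by
      rw [hν _ (hs.union ht), hν s hs, hν t ht,
        indicatorConstLp_disjoint_union hs ht _ _ hst, map_add])
    fun s hs hanti hempty => by
      have hm : Tendsto (fun n => m.real (s n)) atTop (𝓝 0) := by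
        have := tendsto_measure_iInter_atTop (fun n => (hs n).nullMeasurableSet) hanti
          ⟨0, measure_ne_top m _⟩
        rw [hempty, measure_empty] at this
        simpa [Function.comp_def, measureReal_def] using
          (ENNReal.tendsto_toReal ENNReal.zero_ne_top).comp this
      exact tendsto_of_tendsto_of_tendsto_of_le_of_le tendsto_const_nhds hm
        (fun n => (hν_bounds _ (hs n)).1) fun n => (hν_bounds _ (hs n)).2
  refine ⟨τ, Measure.le_iff.2 fun s hs => ?_, fun s hs => ?_⟩
  · rw [hτ s hs]
    exact ENNReal.ofReal_le_of_le_toReal (hν_bounds s hs).2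
  · rw [measureReal_def, hτ s hs, ENNReal.toReal_ofReal (hν_bounds s hs).1, hν s hs]

theorem exists_density_of_nonneg_of_le_integral {F : Lp ℝ 1 m →L[ℝ] ℝ}
    (hF_nonneg : ∀ g : Lp ℝ 1 m, 0 ≤ᵐ[m] g → 0 ≤ F g)
    (hF_le : ∀ g : Lp ℝ 1 m, 0 ≤ᵐ[m] g → F g ≤ ∫ x, g x ∂m) :
    ∃ ρ : X → ℝ, Measurable ρ ∧ (∀ x, ρ x ∈ Set.Icc 0 1) ∧
      ∀ g : Lp ℝ 1 m, F g = ∫ x, ρ x * g x ∂m := by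
  obtain ⟨τ, hτ_le, hτ⟩ := exists_measure_le_of_nonneg_of_le_integral hF_nonneg hF_le
  have := isFiniteMeasure_of_le m hτ_le
  set ρ : X → ℝ := fun x => min (τ.rnDeriv m x).toReal 1
  have hρ_meas : Measurable ρ :=
    (Measure.measurable_rnDeriv τ m).ennreal_toReal.min measurable_const
  have hρ_mem : ∀ x, ρ x ∈ Set.Icc 0 1 :=
    fun x => ⟨le_min ENNReal.toReal_nonneg zero_le_one, min_le_right _ _⟩
  have hρ_ae : ρ =ᵐ[m] fun x => (τ.rnDeriv m x).toReal :=
    (Measure.rnDeriv_le_one_of_le hτ_le).mono fun x hx =>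
      min_eq_left (ENNReal.toReal_le_of_le_ofReal zero_le_one (by simpa using hx))
  have hρ_top : MemLp ρ ∞ m := memLp_top_of_bound hρ_meas.aestronglyMeasurable 1
    (.of_forall fun x => abs_le.2 ⟨by linarith [(hρ_mem x).1], (hρ_mem x).2⟩)
  set G := (ContinuousLinearMap.mul ℝ ℝ).lpPairing m ∞ 1 (hρ_top.toLp ρ)
  have hG : ∀ g : Lp ℝ 1 m, G g = ∫ x, ρ x * g x ∂m := fun g =>
    (ContinuousLinearMap.lpPairing_eq_integral _ _ _).trans
      (integral_congr_ae (hρ_top.coeFn_toLp.mono fun x hx => by simp [hx]))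
  have hFG : F = G := ContinuousLinearMap.ext_indicatorConstLp fun s hs hms => by
    rw [hG, ← hτ s hs,
      ← Measure.setIntegral_toReal_rnDeriv (Measure.absolutelyContinuous_of_le hτ_le),
      ← integral_congr_ae (ae_restrict_of_ae hρ_ae), ← integral_indicator (f := ρ) hs]
    refine integral_congr_ae ((indicatorConstLp_coeFn (p := 1) (hs := hs) (hμs := hms)
      (c := (1 : ℝ))).mono fun x hx => ?_)
    by_cases hxs : x ∈ s <;> simp [hx, hxs]
  exact ⟨ρ, hρ_meas, hρ_mem, fun g => by rw [hFG, hG]⟩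

theorem mem_closure_span_setIntegralCLM {F : Lp ℝ 1 m →L[ℝ] ℝ}
    (hF_nonneg : ∀ g : Lp ℝ 1 m, 0 ≤ᵐ[m] g → 0 ≤ F g)
    (hF_le : ∀ g : Lp ℝ 1 m, 0 ≤ᵐ[m] g → F g ≤ ∫ x, g x ∂m) :
    F ∈ (Submodule.span ℝ (setIntegralCLM m '' {B | MeasurableSet B})).topologicalClosure :=
  let ⟨_, hρ, hρ_mem, hF⟩ := exists_density_of_nonneg_of_le_integral hF_nonneg hF_le
  mem_closure_span_setIntegralCLM_of_density hρ hρ_mem hF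

end L1Functionals

section BanachLimitDensity

variable {X : Type*} [MeasurableSpace X] {m : Measure X} {LIM : (ℕ → ℝ) →ₗ[ℝ] ℝ}
  {u : ℕ → Lp ℝ 1 m} {C : ℝ}

theorem tendsto_banachLimit_setIntegral_of_antitone (hLIM : IsBanachLimit LIM)
    (hu_nonneg : ∀ n, 0 ≤ᵐ[m] u n) (hu_norm : ∀ n, ‖u n‖ ≤ C) (hu : WeaklySeqPrecompact u)
    {E : ℕ → Set X} (hE : ∀ k, MeasurableSet (E k)) (hE_anti : Antitone E)
    (hE_empty : ⋂ k, E k = ∅) :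
    Tendsto (fun k => LIM fun n => ∫ x in E k, u n x ∂m) atTop (𝓝 0) := by
  set ν : ℕ → ℝ := fun k => LIM fun n => ∫ x in E k, u n x ∂m
  have hbdd : ∀ k n, |∫ x in E k, u n x ∂m| ≤ C :=
    fun k n => (abs_setIntegral_le_norm _ _).trans (hu_norm n)
  have hint_anti : ∀ {k k'}, k ≤ k' → ∀ n, ∫ x in E k', u n x ∂m ≤ ∫ x in E k, u n x ∂m :=
    fun hkk' n => setIntegral_mono_set (L1.integrable_coeFn _).integrableOn
      (ae_restrict_of_ae (hu_nonneg n)) (hE_anti hkk').eventuallyLE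
  have hν_nonneg : ∀ k, 0 ≤ ν k := fun k => hLIM.le_apply_of_le (hbdd k) fun n =>
    setIntegral_nonneg_of_ae_restrict (ae_restrict_of_ae (hu_nonneg n))
  have hν_bdd : BddBelow (Set.range ν) := ⟨0, Set.forall_mem_range.2 hν_nonneg⟩
  have hν_anti : Antitone ν := fun k k' hkk' => hLIM.mono (hbdd k') (hbdd k) (hint_anti hkk')
  have hν_tendsto := tendsto_atTop_ciInf hν_anti hν_bdd
  suffices h : ⨅ k, ν k ≤ 0 by
    rwa [le_antisymm h (le_ciInf hν_nonneg)] at hν_tendsto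
  by_contra! hc
  set c := ⨅ k, ν k
  -- Pick `u (φ k)` with a large integral over `E k`; a weak limit `z` of a further subsequence
  -- then has `∫_{E k} z ≥ c / 2` for every `k`, contradicting `⋂ k, E k = ∅`.
  have hfreq : ∀ k, ∃ᶠ n in atTop, c / 2 < ∫ x in E k, u n x ∂m := fun k =>
    hLIM.frequently_lt_of_lt_apply (hbdd k) ((half_lt_self hc).trans_le (ciInf_le hν_bdd k))
  obtain ⟨φ, hφ, hφ_gt⟩ := extraction_forall_of_frequently hfreq
  obtain ⟨ψ, hψ, z, hz⟩ := hu φ hφ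
  have hz_ge : ∀ k, c / 2 ≤ ∫ x in E k, z x ∂m := fun k => by
    refine ge_of_tendsto (by simpa only [setIntegralCLM_apply] using hz (setIntegralCLM m (E k)))
      (eventually_atTop.2 ⟨k, fun j hj => ?_⟩)
    exact (hφ_gt (ψ j)).le.trans (hint_anti (hj.trans hψ.le_apply) _)
  have hz_tendsto : Tendsto (fun k => ∫ x in E k, z x ∂m) atTop (𝓝 0) := by
    simpa [hE_empty] using
      tendsto_setIntegral_of_antitone hE hE_anti ⟨0, (L1.integrable_coeFn z).integrableOn⟩
  linarith [ge_of_tendsto hz_tendsto (.of_forall hz_ge)]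

theorem exists_banachLimit_density [SigmaFinite m] (hLIM : IsBanachLimit LIM)
    (hu_dens : ∀ n, IsProbabilityDensity (u n)) (hu : WeaklySeqPrecompact u) :
    ∃ d : Lp ℝ 1 m, IsProbabilityDensity d ∧
      ∀ B, MeasurableSet B → LIM (fun n => ∫ x in B, u n x ∂m) = ∫ x in B, d x ∂m := by
  have hu_norm : ∀ n, ‖u n‖ ≤ 1 := fun n => (hu_dens n).norm_eq_one.le
  set ν : Set X → ℝ := fun B => hLIM.toBidual hu_norm (setIntegralCLM m B)
  have hν : ∀ B, ν B = LIM fun n => ∫ x in B, u n x ∂m := fun B => by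
    simp only [ν, IsBanachLimit.toBidual_apply, setIntegralCLM_apply]
  have hν_nonneg : ∀ B, 0 ≤ ν B := fun B => (hν B).symm ▸ hLIM.le_apply_of_le
    (fun n => (abs_setIntegral_le_norm _ _).trans (hu_norm n))
    fun n => setIntegral_nonneg_of_ae_restrict (ae_restrict_of_ae (hu_dens n).nonneg)
  obtain ⟨μ, hμ⟩ := exists_measure_of_tendsto_zero ν (fun B _ => hν_nonneg B)
    (fun s t _ ht hst => by simp only [ν, setIntegralCLM_union hst ht, map_add])
    fun E hE hanti hempty => by
      simpa only [hν] using tendsto_banachLimit_setIntegral_of_antitone hLIM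
        (fun n => (hu_dens n).nonneg) hu_norm hu hE hanti hempty
  have : IsFiniteMeasure μ := ⟨by rw [hμ _ .univ]; exact ENNReal.ofReal_lt_top⟩
  have hμm : μ ≪ m := Measure.AbsolutelyContinuous.mk fun B hB hmB => by
    simp [hμ B hB, hν, Measure.restrict_eq_zero.2 hmB, hLIM.map_const]
  set d := (Measure.integrable_toReal_rnDeriv (μ := μ) (ν := m)).toL1 _
  have hd_ae : ⇑d =ᵐ[m] fun x => (μ.rnDeriv m x).toReal := Integrable.coeFn_toL1 _
  have hd : ∀ B, MeasurableSet B → LIM (fun n => ∫ x in B, u n x ∂m) = ∫ x in B, d x ∂m :=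
    fun B hB => by
      rw [← hν, integral_congr_ae (ae_restrict_of_ae hd_ae),
        Measure.setIntegral_toReal_rnDeriv hμm, measureReal_def, hμ B hB,
        ENNReal.toReal_ofReal (hν_nonneg B)]
  refine ⟨d, ⟨hd_ae.mono fun x hx => by rw [hx]; exact ENNReal.toReal_nonneg, ?_⟩, hd⟩
  simpa [(hu_dens _).integral_eq_one, hLIM.map_const] using (hd _ .univ).symm

theorem IsBanachLimit.apply_eq_of_mem_closure_span (hLIM : IsBanachLimit LIM)
    (hu_norm : ∀ n, ‖u n‖ ≤ C) {d : Lp ℝ 1 m}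
    (hd : ∀ B, MeasurableSet B → LIM (fun n => ∫ x in B, u n x ∂m) = ∫ x in B, d x ∂m)
    {F : Lp ℝ 1 m →L[ℝ] ℝ}
    (hF : F ∈ (Submodule.span ℝ (setIntegralCLM m '' {B | MeasurableSet B})).topologicalClosure) :
    LIM (fun n => F (u n)) = F d :=
  ContinuousLinearMap.eqOn_closure_span (f := hLIM.toBidual hu_norm)
    (g := NormedSpace.inclusionInDoubleDual ℝ _ d)
    (by rintro _ ⟨B, hB, rfl⟩; simpa [setIntegralCLM_apply] using hd B hB) hF

end BanachLimitDensity

section Markov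

variable {X : Type*} [MeasurableSpace X] {m : Measure X}

structure IsMarkovOperator (T : Lp ℝ 1 m →L[ℝ] Lp ℝ 1 m) : Prop where
  nonneg : ∀ g : Lp ℝ 1 m, 0 ≤ᵐ[m] g → 0 ≤ᵐ[m] T g
  integral_eq : ∀ g : Lp ℝ 1 m, ∫ x, T g x ∂m = ∫ x, g x ∂m

namespace IsMarkovOperator

variable {S T : Lp ℝ 1 m →L[ℝ] Lp ℝ 1 m}

protected theorem id : IsMarkovOperator (ContinuousLinearMap.id ℝ (Lp ℝ 1 m)) :=
  ⟨fun _ hg => hg, fun _ => rfl⟩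

theorem comp (hS : IsMarkovOperator S) (hT : IsMarkovOperator T) :
    IsMarkovOperator (S.comp T) :=
  ⟨fun g hg => hS.nonneg _ (hT.nonneg g hg), fun g => (hS.integral_eq _).trans (hT.integral_eq g)⟩

theorem isProbabilityDensity (hT : IsMarkovOperator T) {g : Lp ℝ 1 m}
    (hg : IsProbabilityDensity g) : IsProbabilityDensity (T g) :=
  ⟨hT.nonneg g hg.nonneg, (hT.integral_eq g).trans hg.integral_eq_one⟩

theorem setIntegralCLM_comp_mem_closure_span [IsFiniteMeasure m] (hT : IsMarkovOperator T)
    (B : Set X) : (setIntegralCLM m B).comp T ∈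
      (Submodule.span ℝ (setIntegralCLM m '' {B | MeasurableSet B})).topologicalClosure := by
  refine mem_closure_span_setIntegralCLM (fun g hg => ?_) fun g hg => ?_
  · simpa only [ContinuousLinearMap.comp_apply, setIntegralCLM_apply] using
      setIntegral_nonneg_of_ae_restrict (ae_restrict_of_ae (hT.nonneg g hg))
  · simpa only [ContinuousLinearMap.comp_apply, setIntegralCLM_apply, hT.integral_eq] using
      setIntegral_le_integral (L1.integrable_coeFn (T g)) (hT.nonneg g hg)

theorem map_banachLimit_density [IsFiniteMeasure m] {LIM : (ℕ → ℝ) →ₗ[ℝ] ℝ}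
    (hT : IsMarkovOperator T) (hLIM : IsBanachLimit LIM)
    {u v : ℕ → Lp ℝ 1 m} (hu : ∀ n, IsProbabilityDensity (u n))
    (hv : ∀ n, IsProbabilityDensity (v n)) (huv : ∀ n, v (n + 1) = T (u n)) {d d' : Lp ℝ 1 m}
    (hd : ∀ B, MeasurableSet B → LIM (fun n => ∫ x in B, u n x ∂m) = ∫ x in B, d x ∂m)
    (hd' : ∀ B, MeasurableSet B → LIM (fun n => ∫ x in B, v n x ∂m) = ∫ x in B, d' x ∂m) :
    T d = d' := by
  refine Lp.ext (Integrable.ae_eq_of_forall_setIntegral_eq _ _ (L1.integrable_coeFn _)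
    (L1.integrable_coeFn _) fun B hB _ => ?_)
  calc ∫ x in B, T d x ∂m
      = LIM fun n => (setIntegralCLM m B).comp T (u n) := by
        rw [hLIM.apply_eq_of_mem_closure_span (fun n => (hu n).norm_eq_one.le) hd
          (hT.setIntegralCLM_comp_mem_closure_span B), ContinuousLinearMap.comp_apply,
          setIntegralCLM_apply]
    _ = LIM fun n => ∫ x in B, v (n + 1) x ∂m := by
        simp only [ContinuousLinearMap.comp_apply, setIntegralCLM_apply, huv]
    _ = ∫ x in B, d' x ∂m := (hLIM.map_shift _ ⟨1, fun n =>
        (abs_setIntegral_le_norm _ _).trans (hv n).norm_eq_one.le⟩).trans (hd' B hB)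

end IsMarkovOperator

end Markov

section Cocycle

variable {Ω 𝔛 : Type*} [NormedAddCommGroup 𝔛] [NormedSpace ℝ 𝔛] {σ τ : Ω → Ω}

theorem clmCocycle_succ' (P : Ω → (𝔛 →L[ℝ] 𝔛)) (n : ℕ) (ω : Ω) :
    clmCocycle σ P (n + 1) ω = (P (σ^[n] ω)).comp (clmCocycle σ P n ω) := by
  induction n generalizing ω with
  | zero => rfl
  | succ n ih => rw [clmCocycle, ih (σ ω)]; rfl

theorem clmCocycle_succ_iterate_eq_comp (hl : Function.LeftInverse τ σ)
    (hr : Function.RightInverse τ σ) (P : Ω → (𝔛 →L[ℝ] 𝔛)) (n : ℕ) (ω : Ω) :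
    clmCocycle σ P (n + 1) (τ^[n + 1] (σ ω)) = (P ω).comp (clmCocycle σ P n (τ^[n] ω)) := by
  rw [Function.iterate_succ_apply, hl ω, clmCocycle_succ', hr.iterate n ω]

variable {X : Type*} [MeasurableSpace X] {m : Measure X} {P : Ω → (Lp ℝ 1 m →L[ℝ] Lp ℝ 1 m)}

theorem isMarkovOperator_clmCocycle {n : ℕ} {ω : Ω}
    (hP : ∀ k < n, IsMarkovOperator (P (σ^[k] ω))) : IsMarkovOperator (clmCocycle σ P n ω) := by
  induction n generalizing ω with
  | zero => exact .id
  | succ n ih =>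
    exact (ih fun k hk => by simpa using hP (k + 1) (by omega)).comp (hP 0 n.succ_pos)

theorem isMarkovOperator_clmCocycle_iterate (hr : Function.RightInverse τ σ) {ω : Ω}
    (hP : ∀ j, IsMarkovOperator (P (τ^[j] ω))) (n : ℕ) :
    IsMarkovOperator (clmCocycle σ P n (τ^[n] ω)) := by
  refine isMarkovOperator_clmCocycle fun k hk => ?_
  obtain ⟨j, rfl⟩ := Nat.exists_eq_add_of_le hk.le
  rw [Function.iterate_add_apply, hr.iterate k]
  exact hP j

end Cocycle

theorem banach_limit_gives_invariant_measure_general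
    {Ω : Type*} [MeasurableSpace Ω] (ℙ : Measure Ω)
    {X : Type*} [MeasurableSpace X] (m : Measure X) [IsProbabilityMeasure m]
    (σ : Ω ≃ᵐ Ω) (hσ : Ergodic σ ℙ)
    (P : Ω → (Lp ℝ 1 m →L[ℝ] Lp ℝ 1 m))
    (hMarkov : ∀ᵐ ω ∂ℙ,
      (∀ g : Lp ℝ 1 m, 0 ≤ᵐ[m] ⇑g → 0 ≤ᵐ[m] ⇑(P ω g)) ∧
      (∀ g : Lp ℝ 1 m, ∫ x, (P ω g) x ∂m = ∫ x, g x ∂m))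
    (hwpc : ∀ᵐ ω ∂ℙ,
      WeaklySeqPrecompact (fun n : ℕ => clmCocycle σ P n (σ.symm^[n] ω) (oneLp m)))
    (LIM : (ℕ → ℝ) →ₗ[ℝ] ℝ)
    (hLIMpos : ∀ u : ℕ → ℝ, (∃ M, ∀ n, |u n| ≤ M) → (∀ n, 0 ≤ u n) → 0 ≤ LIM u)
    (hLIMshift : ∀ u : ℕ → ℝ, (∃ M, ∀ n, |u n| ≤ M) →
      LIM (fun n => u (n + 1)) = LIM u)
    (hLIMlim : ∀ (u : ℕ → ℝ) (a : ℝ), Tendsto u atTop (nhds a) → LIM u = a) :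
    ∃ (μ : Ω → Measure X) (d : Ω → Lp ℝ 1 m), ∀ᵐ ω ∂ℙ,
      (∀ E : Set X, MeasurableSet E → μ ω E = ENNReal.ofReal
        (LIM (fun n => ∫ x in E, (clmCocycle σ P n (σ.symm^[n] ω) (oneLp m)) x ∂m))) ∧
      IsProbabilityMeasure (μ ω) ∧
      μ ω ≪ m ∧
      (⇑(d ω) =ᵐ[m] fun x => ((μ ω).rnDeriv m x).toReal) ∧
      P ω (d ω) = d (σ ω) := by
  have hLIM : IsBanachLimit LIM := ⟨hLIMpos, hLIMshift, hLIMlim⟩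
  set u : Ω → ℕ → Lp ℝ 1 m := fun ω n => clmCocycle σ P n (σ.symm^[n] ω) (oneLp m)
  set Good : Ω → Prop := fun ω =>
    (∀ j, IsMarkovOperator (P (σ.symm^[j] ω))) ∧ WeaklySeqPrecompact (u ω)
  have hgood : ∀ᵐ ω ∂ℙ, Good ω :=
    (ae_all_iff.2 fun j => ((hσ.toMeasurePreserving.symm σ).iterate j).quasiMeasurePreserving.ae
      (hMarkov.mono fun _ h => (⟨h.1, h.2⟩ : IsMarkovOperator _))).and hwpc
  have hu : ∀ ω, Good ω → ∀ n, IsProbabilityDensity (u ω n) := fun ω h n =>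
    (isMarkovOperator_clmCocycle_iterate σ.apply_symm_apply h.1 n).isProbabilityDensity
      isProbabilityDensity_oneLp
  choose! d hd using fun ω (h : Good ω) => exists_banachLimit_density hLIM (hu ω h) h.2
  refine ⟨fun ω => m.withDensity fun x => ENNReal.ofReal (d ω x), d, ?_⟩
  filter_upwards [hgood, hσ.toMeasurePreserving.quasiMeasurePreserving.ae hgood] with ω hω hσω
  obtain ⟨hd_dens, hd_set⟩ := hd ω hω
  refine ⟨fun E hE => by rw [withDensity_ofReal_apply_eq hd_dens.nonneg hE, hd_set E hE],
    hd_dens.isProbabilityMeasure_withDensity, withDensity_absolutelyContinuous _ _,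
    toReal_rnDeriv_withDensity_ofReal hd_dens.nonneg, ?_⟩
  exact (hω.1 0).map_banachLimit_density hLIM (hu ω hω) (hu (σ ω) hσω)
    (fun n => congrArg (· (oneLp m))
      (clmCocycle_succ_iterate_eq_comp σ.symm_apply_apply σ.apply_symm_apply P n ω))
    hd_set (hd (σ ω) hσω).2

/-- If `{P^{(n)}_{σ^{-n}ω} 1_X}_n` is weakly precompact for ℙ-a.e. `ω`, then
for any Banach limit `LIM` and ℙ-a.e. `ω`, the set function
`μ_ω(E) = LIM({∫_E P^{(n)}_{σ^{-n}ω} 1_X dm}_n)` is a countably additive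
probability measure, absolutely continuous w.r.t. `m`, whose densities satisfy
`P_ω (dμ_ω/dm) = dμ_{σω}/dm`. -/
theorem banach_limit_gives_invariant_measure
    {Ω : Type*} [MeasurableSpace Ω] (ℙ : Measure Ω) [IsProbabilityMeasure ℙ]
    {X : Type*} [MeasurableSpace X] (m : Measure X) [IsProbabilityMeasure m]
    (σ : Ω ≃ᵐ Ω) (hσ : Ergodic σ ℙ)
    (P : Ω → (Lp ℝ 1 m →L[ℝ] Lp ℝ 1 m))
    (hMarkov : ∀ᵐ ω ∂ℙ,
      (∀ g : Lp ℝ 1 m, 0 ≤ᵐ[m] ⇑g → 0 ≤ᵐ[m] ⇑(P ω g)) ∧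
      (∀ g : Lp ℝ 1 m, ∫ x, (P ω g) x ∂m = ∫ x, g x ∂m))
    (hwpc : ∀ᵐ ω ∂ℙ,
      WeaklySeqPrecompact (fun n : ℕ => clmCocycle σ P n (σ.symm^[n] ω) (oneLp m)))
    (LIM : (ℕ → ℝ) →ₗ[ℝ] ℝ)
    (hLIMpos : ∀ u : ℕ → ℝ, (∃ M, ∀ n, |u n| ≤ M) → (∀ n, 0 ≤ u n) → 0 ≤ LIM u)
    (hLIMshift : ∀ u : ℕ → ℝ, (∃ M, ∀ n, |u n| ≤ M) →
      LIM (fun n => u (n + 1)) = LIM u)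
    (hLIMlim : ∀ (u : ℕ → ℝ) (a : ℝ), Tendsto u atTop (nhds a) → LIM u = a) :
    ∃ (μ : Ω → Measure X) (d : Ω → Lp ℝ 1 m), ∀ᵐ ω ∂ℙ,
      (∀ E : Set X, MeasurableSet E → μ ω E = ENNReal.ofReal
        (LIM (fun n => ∫ x in E, (clmCocycle σ P n (σ.symm^[n] ω) (oneLp m)) x ∂m))) ∧
      IsProbabilityMeasure (μ ω) ∧
      μ ω ≪ m ∧
      (⇑(d ω) =ᵐ[m] fun x => ((μ ω).rnDeriv m x).toReal) ∧
      P ω (d ω) = d (σ ω) :=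
  banach_limit_gives_invariant_measure_general ℙ m σ hσ P hMarkov hwpc LIM hLIMpos hLIMshift hLIMlim
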